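/- arXiv:1310.2848 — 3 statements merged into one kernel-verified Lean document; each statement's English description precedes it below -/
import Mathlib

section
/- Let T be an abelian group and let K_0 ≤ K ≤ T be subgroups with the index [K : K_0] finite, say equal to m. Then there exists a unitary representation ρ : T → U(m) such that: ρ(x) is the identity matrix for every x ∈ K_0; trace(ρ(x)) = 0 for every x ∈ K ∖ K_0; and ρ contains the trivial one-dimensional representation as a direct summand, i.e. there is a nonzero vector v ∈ ℂ^m with ρ(t)v = v for all t ∈ T. -/
/-!
The circle group is divisible, hence injective among abelian groups, so every circle-valued
character of `K / K₀` (viewed as a character of `K`) extends to a character of `T`. The diagonal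
representation of `T` built from one such extension for each of the `m` characters of `K / K₀`
restricts on `K` to the regular representation of `K / K₀`: it is trivial on `K₀`, and by
orthogonality of characters its trace vanishes off `K₀`.
-/

noncomputable instance Circle.instDivisibleByAdditiveInt : DivisibleBy (Additive Circle) ℤ :=
  Function.Surjective.divisibleBy Circle.expHom Circle.exp_surjective
    fun x n => map_zsmul Circle.expHom n x

theorem MonoidHom.exists_comp_subtype_eq_of_divisible {T G : Type*} [CommGroup T] [CommGroup G]
    [DivisibleBy (Additive G) ℤ] (K : Subgroup T) (f : K →* G) :
    ∃ g : T →* G, g.comp K.subtype = f := by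
  obtain ⟨g, hg⟩ := (Module.Baer.of_divisible (Additive G)).extension_property_addMonoidHom
    (MonoidHom.toAdditive K.subtype) Subtype.val_injective (MonoidHom.toAdditive f)
  exact ⟨MonoidHom.toAdditive.symm g, by rw [← MonoidHom.toAdditive.apply_eq_iff_eq]; exact hg⟩

namespace Matrix

variable {ι : Type*} [Fintype ι] [DecidableEq ι]

theorem diagonal_mem_unitaryGroup (z : ι → Circle) :
    diagonal (fun i => (z i : ℂ)) ∈ unitaryGroup ι ℂ := by
  simp [mem_unitaryGroup_iff, star_eq_conjTranspose, diagonal_conjTranspose,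
    diagonal_mul_diagonal, ← Circle.coe_inv_eq_conj]

def diagonalUnitaryHom : (ι → Circle) →* unitaryGroup ι ℂ where
  toFun z := ⟨diagonal fun i => (z i : ℂ), diagonal_mem_unitaryGroup z⟩
  map_one' := by ext1; simp
  map_mul' z w := by ext1; simp

@[simp]
theorem coe_diagonalUnitaryHom (z : ι → Circle) :
    (diagonalUnitaryHom z : Matrix ι ι ℂ) = diagonal fun i => (z i : ℂ) := rfl

end Matrix

namespace CommGroup

variable {Q : Type*} [CommGroup Q] [Finite Q]

variable (Q) in
noncomputable def monoidHomCircleEquivAddChar : (Q →* Circle) ≃ AddChar (Additive Q) ℂ :=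
  (AddChar.toMonoidHomEquiv (A := Additive Q) (M := Circle)).symm.trans
    AddChar.circleEquivComplex.toEquiv

variable (Q) in
theorem card_monoidHom_circle : Nat.card (Q →* Circle) = Nat.card Q := by
  have := Fintype.ofFinite Q
  rw [Nat.card_congr (monoidHomCircleEquivAddChar Q), Nat.card_eq_fintype_card,
    AddChar.card_eq, Fintype.card_additive, Nat.card_eq_fintype_card]

theorem sum_monoidHom_circle_apply_eq_zero {ι : Type*} [Fintype ι] (e : ι ≃ (Q →* Circle))
    {q : Q} (hq : q ≠ 1) : ∑ i, (e i q : ℂ) = 0 := by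
  have := Fintype.ofFinite Q
  rw [← (AddChar.sum_apply_eq_zero_iff_ne_zero (a := Additive.ofMul q)).mpr hq]
  exact Equiv.sum_comp (e.trans (monoidHomCircleEquivAddChar Q)) (· (Additive.ofMul q))

end CommGroup

/-- **Extension of the regular character of `K/K₀` to `T`** (Lemma 3.6 of the paper).
If `T` is an abelian group and `K₀ ≤ K` are subgroups of `T` with `[K : K₀] = m` finite,
then there is a unitary representation `ρ : T → U(m)` which is trivial on `K₀`, whose
character vanishes on `K \ K₀`, and which contains the trivial one-dimensional
representation as a direct summand (i.e. has a nonzero `T`-fixed vector). -/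
theorem exists_representation_vanishing_off_identity_component
    (T : Type) [CommGroup T] (K0 K : Subgroup T) (hle : K0 ≤ K)
    (m : ℕ) (hm : K0.relIndex K = m) (hm0 : m ≠ 0) :
    ∃ ρ : T →* Matrix.unitaryGroup (Fin m) ℂ,
      (∀ x ∈ K0, ρ x = 1) ∧
      (∀ x ∈ K, x ∉ K0 → Matrix.trace (ρ x : Matrix (Fin m) (Fin m) ℂ) = 0) ∧
      (∃ v : Fin m → ℂ, v ≠ 0 ∧
        ∀ t : T, (ρ t : Matrix (Fin m) (Fin m) ℂ).mulVec v = v) := by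
  set Q := K ⧸ K0.subgroupOf K
  have hQ : Nat.card Q = m := hm
  have : Finite Q := Nat.finite_of_card_ne_zero (hQ ▸ hm0)
  have hcard : Nat.card (Q →* Circle) = m := (CommGroup.card_monoidHom_circle Q).trans hQ
  have : Finite (Q →* Circle) := Nat.finite_of_card_ne_zero (hcard ▸ hm0)
  let e : Fin m ≃ (Q →* Circle) := (Finite.equivFinOfCardEq hcard).symm
  -- the trivial character is extended trivially, so that `ρ` fixes a basis vector
  have hext (i : Fin m) : ∃ χ : T →* Circle,
      χ.comp K.subtype = (e i).comp (QuotientGroup.mk' _) ∧ (e i = 1 → χ = 1) := by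
    by_cases h : e i = 1
    · exact ⟨1, by simp [h], fun _ => rfl⟩
    · obtain ⟨χ, hχ⟩ :=
        MonoidHom.exists_comp_subtype_eq_of_divisible K ((e i).comp (QuotientGroup.mk' _))
      exact ⟨χ, hχ, fun h' => absurd h' h⟩
  choose χ hχK hχ1 using hext
  have hχ (i : Fin m) (x : T) (hx : x ∈ K) : χ i x = e i (QuotientGroup.mk ⟨x, hx⟩) :=
    DFunLike.congr_fun (hχK i) ⟨x, hx⟩
  refine ⟨Matrix.diagonalUnitaryHom.comp (MonoidHom.pi χ), fun x hx => ?_, fun x hx hx0 => ?_,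
    Pi.single (e.symm 1) 1, by simp, fun t => ?_⟩
  · have hq : (QuotientGroup.mk ⟨x, hle hx⟩ : Q) = 1 := (QuotientGroup.eq_one_iff _).mpr hx
    ext1
    simp [hχ _ x (hle hx), hq]
  · have hq : (QuotientGroup.mk ⟨x, hx⟩ : Q) ≠ 1 := mt (QuotientGroup.eq_one_iff _).mp hx0
    simp only [MonoidHom.comp_apply, Matrix.coe_diagonalUnitaryHom, Matrix.trace_diagonal,
      MonoidHom.pi_apply, hχ _ x hx]
    exact CommGroup.sum_monoidHom_circle_apply_eq_zero e hq
  · simp [hχ1 _ (e.apply_symm_apply 1)]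
end

section
/- Let T be a group, W a finite subgroup of the automorphism group Aut(T), ρ : T → U(m) a unitary representation, and X ⊆ T a subset such that trace(ρ(x)) = 0 for every x ∈ X. Then there exists a unitary representation φ of T of dimension m^{|W|} such that trace(φ(w(t))) = trace(φ(t)) for every t ∈ T and every w ∈ W, and trace(φ(y)) = 0 for every y ∈ w(X) and every w ∈ W. Moreover, if ρ has a nonzero vector fixed by all of T, then φ can be chosen to have a nonzero vector fixed by all of T. -/
/-!
The Kronecker product `⊗_{w ∈ W} ρ(w t)` is a unitary representation of `T` whose character
at `t` is `∏_{w ∈ W} χ_ρ(w t)`. Reindexing this product by right multiplication in `W` shows that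
it is `W`-invariant, and its factor at `w = 1` makes it vanish on `X`, hence on every `w(X)`.
A `T`-fixed vector `v` of `ρ` yields the `T`-fixed pure tensor `⊗_{w ∈ W} v`.
-/

open Matrix

namespace Matrix

section PiKronecker

variable {ι l m n R : Type*} [Fintype ι]

def piKronecker [CommMonoid R] (A : ι → Matrix l m R) : Matrix (ι → l) (ι → m) R :=
  of fun a b => ∏ i, A i (a i) (b i)

@[simp]
lemma piKronecker_apply [CommMonoid R] (A : ι → Matrix l m R) (a : ι → l) (b : ι → m) :
    piKronecker A a b = ∏ i, A i (a i) (b i) := rfl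

variable [CommSemiring R]

lemma piKronecker_mul [DecidableEq ι] [Fintype m] (A : ι → Matrix l m R) (B : ι → Matrix m n R) :
    piKronecker A * piKronecker B = piKronecker fun i => A i * B i := by
  ext a b
  simp only [piKronecker_apply, mul_apply, Fintype.prod_sum, Finset.prod_mul_distrib]

lemma piKronecker_one [DecidableEq m] : piKronecker (fun _ : ι => (1 : Matrix m m R)) = 1 := by
  ext a b
  simp only [piKronecker_apply, one_apply, Fintype.prod_boole, funext_iff]

lemma trace_piKronecker [DecidableEq ι] [Fintype m] (A : ι → Matrix m m R) :
    (piKronecker A).trace = ∏ i, (A i).trace := by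
  simp only [trace, diag_apply, piKronecker_apply, Fintype.prod_sum]

lemma piKronecker_mulVec_prod [DecidableEq ι] [Fintype m] (A : ι → Matrix l m R) (v : ι → m → R) :
    piKronecker A *ᵥ (fun b => ∏ i, v i (b i)) = fun a => ∏ i, (A i *ᵥ v i) (a i) := by
  ext a
  simp only [mulVec, dotProduct, piKronecker_apply, Fintype.prod_sum, Finset.prod_mul_distrib]

lemma conjTranspose_piKronecker [StarRing R] (A : ι → Matrix l m R) :
    (piKronecker A)ᴴ = piKronecker fun i => (A i)ᴴ := by
  ext a b
  simp only [conjTranspose_apply, piKronecker_apply, star_prod]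

end PiKronecker

section Unitary

variable {ι m n R : Type*} [Fintype ι] [DecidableEq ι] [Fintype m] [DecidableEq m]
  [Fintype n] [DecidableEq n] [CommRing R] [StarRing R]

lemma piKronecker_mem_unitaryGroup {A : ι → Matrix m m R}
    (hA : ∀ i, A i ∈ unitaryGroup m R) : piKronecker A ∈ unitaryGroup (ι → m) R := by
  simp only [mem_unitaryGroup_iff', star_eq_conjTranspose] at hA ⊢
  rw [conjTranspose_piKronecker, piKronecker_mul]
  simp only [hA, piKronecker_one]

variable (ι m R) in
def piKroneckerUnitaryHom : (ι → unitaryGroup m R) →* unitaryGroup (ι → m) R where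
  toFun U := ⟨piKronecker fun i => U i, piKronecker_mem_unitaryGroup fun i => (U i).2⟩
  map_one' := Subtype.ext piKronecker_one
  map_mul' _ _ := Subtype.ext (piKronecker_mul _ _).symm

variable (R) in
def unitaryGroupReindex (e : m ≃ n) : unitaryGroup m R →* unitaryGroup n R :=
  (Unitary.map
    { toMonoidHom := (reindexRingEquiv R e : Matrix m m R →+* Matrix n n R)
      map_star' := fun M => (conjTranspose_reindex e e M).symm }).toMonoidHom

@[simp]
lemma coe_unitaryGroupReindex_apply (e : m ≃ n) (U : unitaryGroup m R) :
    (unitaryGroupReindex R e U : Matrix n n R) = reindex e e U := rfl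

end Unitary

lemma trace_reindex {m n R : Type*} [Fintype m] [Fintype n] [AddCommMonoid R] (e : m ≃ n)
    (A : Matrix m m R) : (reindex e e A).trace = A.trace :=
  e.symm.sum_comp fun i => A i i

end Matrix

lemma prod_apply_ne_zero {ι m R : Type*} [Fintype ι] [CommMonoidWithZero R] [NoZeroDivisors R]
    {v : m → R} (hv : v ≠ 0) : (fun a : ι → m => ∏ i, v (a i)) ≠ 0 := by
  obtain ⟨j, hj⟩ := Function.ne_iff.mp hv
  refine Function.ne_iff.mpr ⟨fun _ => j, ?_⟩
  simpa only [Finset.prod_const, Pi.zero_apply] using pow_ne_zero _ hj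

section AutTensorRep

variable {T m R : Type*} [Group T] [Fintype m] [DecidableEq m] [CommRing R] [StarRing R]
  (ρ : T →* unitaryGroup m R) (W : Subgroup (MulAut T)) [Fintype W] [DecidableEq W]

def autTensorRep : T →* unitaryGroup (W → m) R :=
  (piKroneckerUnitaryHom W m R).comp
    (MonoidHom.pi fun w : W => ρ.comp (w : MulAut T).toMonoidHom)

lemma coe_autTensorRep_apply (t : T) :
    (autTensorRep ρ W t : Matrix (W → m) (W → m) R) =
      piKronecker fun w : W => (ρ ((w : MulAut T) t) : Matrix m m R) := rfl

lemma trace_autTensorRep_apply (t : T) :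
    (autTensorRep ρ W t : Matrix (W → m) (W → m) R).trace =
      ∏ w : W, (ρ ((w : MulAut T) t) : Matrix m m R).trace := by
  rw [coe_autTensorRep_apply, trace_piKronecker]

variable {W}

lemma trace_autTensorRep_apply_map {w : MulAut T} (hw : w ∈ W) (t : T) :
    (autTensorRep ρ W (w t) : Matrix (W → m) (W → m) R).trace =
      (autTensorRep ρ W t : Matrix (W → m) (W → m) R).trace := by
  simp only [trace_autTensorRep_apply]
  exact Fintype.prod_equiv (Equiv.mulRight ⟨w, hw⟩) _ _ fun u => by
    rw [Equiv.coe_mulRight, Subgroup.coe_mul, MulAut.mul_apply]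

lemma trace_autTensorRep_apply_map_eq_zero {w : MulAut T} (hw : w ∈ W) {x : T}
    (hx : (ρ x : Matrix m m R).trace = 0) :
    (autTensorRep ρ W (w x) : Matrix (W → m) (W → m) R).trace = 0 := by
  rw [trace_autTensorRep_apply_map ρ hw, trace_autTensorRep_apply]
  exact Finset.prod_eq_zero (Finset.mem_univ 1) hx

lemma autTensorRep_mulVec_prod {v : m → R} (hv : ∀ t, (ρ t : Matrix m m R) *ᵥ v = v) (t : T) :
    (autTensorRep ρ W t : Matrix (W → m) (W → m) R) *ᵥ (fun a => ∏ w, v (a w)) =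
      fun a => ∏ w, v (a w) := by
  simp only [coe_autTensorRep_apply, piKronecker_mulVec_prod (v := fun _ => v), hv]

end AutTensorRep

/-- **Averaging a representation over a finite group of automorphisms**
(the key step in the proof of the paper's main Theorem 3.?).
Given a group `T`, a finite subgroup `W ≤ Aut T`, a unitary representation
`ρ : T → U(m)` and a subset `X ⊆ T` on which the character of `ρ` vanishes, there is a
unitary representation `φ` of `T` of dimension `m ^ |W|` whose character is
`W`-invariant and vanishes on `w(X)` for every `w ∈ W`; moreover, if `ρ` has a nonzero
`T`-fixed vector then `φ` can be chosen to have a nonzero `T`-fixed vector. -/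
theorem averaged_representation_over_automorphisms
    (T : Type) [Group T] (W : Subgroup (MulAut T)) (hWfin : Finite W)
    (m : ℕ) (ρ : T →* Matrix.unitaryGroup (Fin m) ℂ) (X : Set T)
    (hX : ∀ x ∈ X, Matrix.trace (ρ x : Matrix (Fin m) (Fin m) ℂ) = 0) :
    (∃ φ : T →* Matrix.unitaryGroup (Fin (m ^ Nat.card W)) ℂ,
      (∀ w ∈ W, ∀ t : T,
        Matrix.trace (φ (w t) : Matrix (Fin (m ^ Nat.card W)) (Fin (m ^ Nat.card W)) ℂ) =
          Matrix.trace (φ t : Matrix (Fin (m ^ Nat.card W)) (Fin (m ^ Nat.card W)) ℂ)) ∧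
      (∀ w ∈ W, ∀ x ∈ X,
        Matrix.trace (φ (w x) : Matrix (Fin (m ^ Nat.card W)) (Fin (m ^ Nat.card W)) ℂ) = 0)) ∧
    ((∃ v : Fin m → ℂ, v ≠ 0 ∧ ∀ t : T, (ρ t : Matrix (Fin m) (Fin m) ℂ).mulVec v = v) →
      ∃ φ : T →* Matrix.unitaryGroup (Fin (m ^ Nat.card W)) ℂ,
        (∀ w ∈ W, ∀ t : T,
          Matrix.trace (φ (w t) : Matrix (Fin (m ^ Nat.card W)) (Fin (m ^ Nat.card W)) ℂ) =
            Matrix.trace (φ t : Matrix (Fin (m ^ Nat.card W)) (Fin (m ^ Nat.card W)) ℂ)) ∧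
        (∀ w ∈ W, ∀ x ∈ X,
          Matrix.trace (φ (w x) : Matrix (Fin (m ^ Nat.card W)) (Fin (m ^ Nat.card W)) ℂ) = 0) ∧
        (∃ u : Fin (m ^ Nat.card W) → ℂ, u ≠ 0 ∧
          ∀ t : T, (φ t : Matrix (Fin (m ^ Nat.card W)) (Fin (m ^ Nat.card W)) ℂ).mulVec u = u)) := by
  classical
  have : Fintype W := Fintype.ofFinite W
  let e : (W → Fin m) ≃ Fin (m ^ Nat.card W) :=
    Fintype.equivFinOfCardEq (by simp [Nat.card_eq_fintype_card])
  let φ := (unitaryGroupReindex ℂ e).comp (autTensorRep ρ W)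
  have htrace (t : T) : (φ t : Matrix (Fin (m ^ Nat.card W)) (Fin (m ^ Nat.card W)) ℂ).trace =
      (autTensorRep ρ W t : Matrix (W → Fin m) (W → Fin m) ℂ).trace :=
    trace_reindex e (autTensorRep ρ W t : Matrix (W → Fin m) (W → Fin m) ℂ)
  have hinv : ∀ w ∈ W, ∀ t : T,
      (φ (w t) : Matrix (Fin (m ^ Nat.card W)) (Fin (m ^ Nat.card W)) ℂ).trace =
        (φ t : Matrix (Fin (m ^ Nat.card W)) (Fin (m ^ Nat.card W)) ℂ).trace := fun w hw t => by
    rw [htrace, htrace, trace_autTensorRep_apply_map ρ hw]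
  have hvan : ∀ w ∈ W, ∀ x ∈ X,
      (φ (w x) : Matrix (Fin (m ^ Nat.card W)) (Fin (m ^ Nat.card W)) ℂ).trace = 0 :=
    fun w hw x hx => by rw [htrace, trace_autTensorRep_apply_map_eq_zero ρ hw (hX x hx)]
  refine ⟨⟨φ, hinv, hvan⟩, ?_⟩
  rintro ⟨v, hv0, hv⟩
  refine ⟨φ, hinv, hvan, (fun a => ∏ w, v (a w)) ∘ e.symm,
    e.symm.surjective.injective_comp_right.ne (prod_apply_ne_zero hv0), fun t => ?_⟩
  simp only [φ, MonoidHom.comp_apply, coe_unitaryGroupReindex_apply, reindex_apply,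
    submatrix_mulVec_equiv, Equiv.symm_symm, Function.comp_assoc, Equiv.symm_comp_self,
    Function.comp_id, autTensorRep_mulVec_prod ρ hv]
end

section
/- Let p be a prime and let S be a group having a normal subgroup T of finite index such that T is isomorphic to a finite direct sum of copies of the Prüfer p-group. Then S admits a faithful finite-dimensional unitary representation, i.e. an injective group homomorphism S → U(N) for some N ≥ 1. In particular, every discrete p-toral group admits a faithful finite-dimensional unitary representation. -/
/-- `ℚ/ℤ`. -/
abbrev QModZ : Type := ℚ ⧸ AddSubgroup.zmultiples (1 : ℚ)

/-- The Prüfer `p`-group `ℤ/p^∞`: the `p`-primary torsion subgroup of `ℚ/ℤ`. -/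
abbrev PruferGroup (p : ℕ) [Fact p.Prime] : AddSubgroup QModZ :=
  AddCommGroup.primaryComponent QModZ p


/-!
Coordinatewise, `ℚ/ℤ ↪ ℝ/ℤ ≅ U(1)` embeds `T ≅ (ℤ/p^∞)^r` as a group of diagonal unitary
matrices. Inducing this character from the finite-index subgroup `T` up to `S` gives monomial
unitary matrices indexed by `(S ⧸ T) × Option (Fin r)`: `g` permutes the cosets and scales by the
character of the transversal cocycle `(g • q).out⁻¹ * g * q.out ∈ T`. If the matrix of `g` is
trivial, `g` fixes the coset `T`, where the cocycle is a conjugate of `g`, so faithfulness of the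
character forces `g = 1`.
-/

open Function Matrix

namespace QModZ

noncomputable def toAddCircle : QModZ →+ AddCircle (1 : ℝ) :=
  QuotientAddGroup.map _ _ (Rat.castHom ℝ).toAddMonoidHom <| by
    rw [AddSubgroup.zmultiples_le]
    exact ⟨1, by simp⟩

theorem toAddCircle_coe (q : ℚ) : toAddCircle q = ((q : ℝ) : AddCircle (1 : ℝ)) := rfl

theorem toAddCircle_injective : Injective toAddCircle := by
  refine (injective_iff_map_eq_zero _).mpr fun x hx => ?_
  induction x using QuotientAddGroup.induction_on with
  | H q =>
    obtain ⟨n, hn⟩ := (AddCircle.coe_eq_zero_iff _).mp ((toAddCircle_coe q).symm.trans hx)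
    rw [zsmul_one] at hn
    exact (AddCircle.coe_eq_zero_iff _).mpr ⟨n, by rw [zsmul_one]; exact_mod_cast hn⟩

noncomputable def toCircle : Multiplicative QModZ →* Circle where
  toFun x := AddCircle.toCircle (toAddCircle x.toAdd)
  map_one' := by simp
  map_mul' x y := by simp [AddCircle.toCircle_add]

theorem toCircle_injective : Injective toCircle :=
  (AddCircle.injective_toCircle one_ne_zero).comp <|
    toAddCircle_injective.comp Multiplicative.toAdd.injective

-- `Option ι` rather than `ι`, so that the index type is nonempty even when `ι` is empty.
noncomputable def piToCircle (ι : Type*) : Multiplicative (ι → QModZ) →* (Option ι → Circle) :=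
  MonoidHom.pi fun a => a.elim 1 fun i =>
    toCircle.comp (Pi.evalAddMonoidHom (fun _ => QModZ) i).toMultiplicative

theorem piToCircle_injective (ι : Type*) : Injective (piToCircle ι) := by
  refine (injective_iff_map_eq_one _).mpr fun x hx => ?_
  funext i
  exact toCircle_injective ((congrFun hx (some i)).trans toCircle.map_one.symm)

end QModZ

theorem exists_injective_unitaryGroup_fin {G ι : Type*} [Group G] [Fintype ι] [DecidableEq ι]
    [Nonempty ι] (ρ : G →* unitaryGroup ι ℂ) (hρ : Injective ρ) :
    ∃ N : ℕ, 1 ≤ N ∧ ∃ σ : G →* unitaryGroup (Fin N) ℂ, Injective σ := by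
  let e := Fintype.equivFin ι
  let reindex : Matrix ι ι ℂ →⋆* Matrix (Fin _) (Fin _) ℂ :=
    { (reindexRingEquiv ℂ e).toMonoidHom with
      map_star' := fun M => (conjTranspose_reindex e e M).symm }
  exact ⟨_, Fintype.card_pos, (Unitary.map reindex).toMonoidHom.comp ρ,
    (Unitary.map_injective (reindexRingEquiv ℂ e).injective).comp hρ⟩

namespace Monomial

variable {G Q A : Type*} [Group G] [MulAction G Q]

def IsCocycle (c : G → Q → A → Circle) : Prop :=
  ∀ g h q, c (g * h) q = c g (h • q) * c h q

variable {c : G → Q → A → Circle}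

theorem IsCocycle.map_one (hc : IsCocycle c) : c 1 = 1 := by
  funext q
  simpa using hc 1 1 q

theorem IsCocycle.inv_smul (hc : IsCocycle c) (g : G) (q : Q) : c g⁻¹ (g • q) = (c g q)⁻¹ := by
  rw [eq_inv_iff_mul_eq_one, ← hc, inv_mul_cancel, hc.map_one, Pi.one_apply]

variable [DecidableEq Q] [DecidableEq A]

def matrix (c : G → Q → A → Circle) (g : G) : Matrix (Q × A) (Q × A) ℂ :=
  of fun x y => if x = (g • y.1, y.2) then (c g y.1 y.2 : ℂ) else 0

theorem matrix_one (hc : IsCocycle c) : matrix c 1 = 1 := by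
  ext x y
  simp [matrix, hc.map_one, Matrix.one_apply]

theorem star_matrix (hc : IsCocycle c) (g : G) : star (matrix c g) = matrix c g⁻¹ := by
  ext ⟨q, a⟩ ⟨q', b⟩
  simp only [matrix, star_apply, of_apply, Prod.mk.injEq]
  by_cases h : q' = g • q ∧ b = a
  · obtain ⟨rfl, rfl⟩ := h
    simp [hc.inv_smul, ← Circle.coe_inv_eq_conj]
  · rw [if_neg h, if_neg (by rwa [eq_inv_smul_iff, eq_comm, @eq_comm _ a]), star_zero]

variable [Fintype Q] [Fintype A]

theorem matrix_mul (hc : IsCocycle c) (g h : G) : matrix c (g * h) = matrix c g * matrix c h := by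
  ext x ⟨q, a⟩
  simp [matrix, Matrix.mul_apply, mul_smul, hc g h q, ite_mul]

noncomputable def rep (hc : IsCocycle c) : G →* unitaryGroup (Q × A) ℂ where
  toFun g := ⟨matrix c g, by
    rw [mem_unitaryGroup_iff, star_matrix hc, ← matrix_mul hc, mul_inv_cancel, matrix_one hc]⟩
  map_one' := Subtype.ext (matrix_one hc)
  map_mul' g h := Subtype.ext (matrix_mul hc g h)

theorem forall_smul_eq_and_eq_one_of_rep_eq_one [Nonempty A] (hc : IsCocycle c) {g : G}
    (hg : rep hc g = 1) :
    (∀ q : Q, g • q = q) ∧ c g = 1 := by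
  replace hg : matrix c g = 1 := congr_arg Subtype.val hg
  obtain ⟨a⟩ := ‹Nonempty A›
  have hfix (q : Q) : g • q = q := by
    by_contra hne
    simpa [matrix, Matrix.one_apply, hne] using congr_fun₂ hg (g • q, a) (q, a)
  refine ⟨hfix, funext₂ fun q b => ?_⟩
  simpa [matrix, hfix, Circle.coe_eq_one] using congr_fun₂ hg (q, b) (q, b)

end Monomial

section Induced

variable {G A : Type*} [Group G] (H : Subgroup G)

noncomputable def transversalCocycle (g : G) (q : G ⧸ H) : H :=
  ⟨(g • q).out⁻¹ * (g * q.out), QuotientGroup.eq.mp <| by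
    rw [QuotientGroup.out_eq', ← smul_eq_mul, ← MulAction.Quotient.smul_coe, QuotientGroup.out_eq']⟩

theorem transversalCocycle_mul (g h : G) (q : G ⧸ H) :
    transversalCocycle H (g * h) q =
      transversalCocycle H g (h • q) * transversalCocycle H h q := by
  ext
  simp [transversalCocycle, mul_smul, mul_assoc]

theorem eq_one_of_transversalCocycle_eq_one {g : G} {q : G ⧸ H} (hg : g • q = q)
    (h : transversalCocycle H g q = 1) : g = 1 := by
  simpa [transversalCocycle, hg, inv_mul_eq_one] using congr_arg Subtype.val h

variable [Fintype (G ⧸ H)] [DecidableEq (G ⧸ H)] [Fintype A] [DecidableEq A]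

noncomputable def inducedRep (χ : H →* (A → Circle)) : G →* unitaryGroup ((G ⧸ H) × A) ℂ :=
  Monomial.rep (c := fun g q => χ (transversalCocycle H g q)) fun g h q => by
    simp [transversalCocycle_mul]

theorem inducedRep_injective [Nonempty A] {χ : H →* (A → Circle)} (hχ : Injective χ) :
    Injective (inducedRep H χ) := by
  refine (injective_iff_map_eq_one _).mpr fun g hg => ?_
  obtain ⟨hfix, hc⟩ := Monomial.forall_smul_eq_and_eq_one_of_rep_eq_one _ hg
  exact eq_one_of_transversalCocycle_eq_one H (hfix (1 : G))
    (hχ ((congr_fun hc (1 : G)).trans χ.map_one.symm))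

end Induced

theorem discrete_p_toral_faithful_unitary_general
    (p : ℕ) [Fact p.Prime] (S : Type) [Group S]
    (T : Subgroup S) (hfin : T.index ≠ 0)
    (r : ℕ) (e : T ≃* Multiplicative (Fin r → PruferGroup p)) :
    ∃ N : ℕ, 1 ≤ N ∧
      ∃ σ : S →* Matrix.unitaryGroup (Fin N) ℂ, Function.Injective σ := by
  classical
  have : T.FiniteIndex := ⟨hfin⟩
  have := Fintype.ofFinite (S ⧸ T)
  let χ : T →* (Option (Fin r) → Circle) := (QModZ.piToCircle (Fin r)).comp <|
    (AddMonoidHom.compLeft (PruferGroup p).subtype (Fin r)).toMultiplicative.comp e.toMonoidHom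
  have hχ : Injective χ := (QModZ.piToCircle_injective _).comp <|
    Subtype.val_injective.comp_left.comp e.injective
  exact exists_injective_unitaryGroup_fin _ (inducedRep_injective T hχ)

/-- **Discrete `p`-toral groups have faithful unitary representations.**
If `S` is a group with a normal subgroup `T` of finite index isomorphic to a finite
direct sum of copies of the Prüfer `p`-group, then `S` admits a faithful
finite-dimensional unitary representation `S → U(N)` for some `N ≥ 1`. -/
theorem discrete_p_toral_faithful_unitary
    (p : ℕ) [Fact p.Prime] (S : Type) [Group S]
    (T : Subgroup S) (hN : T.Normal) (hfin : T.index ≠ 0)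
    (r : ℕ) (e : T ≃* Multiplicative (Fin r → PruferGroup p)) :
    ∃ N : ℕ, 1 ≤ N ∧
      ∃ σ : S →* Matrix.unitaryGroup (Fin N) ℂ, Function.Injective σ :=
  discrete_p_toral_faithful_unitary_general p S T hfin r e
end
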